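/- arXiv:1603.06539 — 2 statements merged into one kernel-verified Lean document; each statement's English description precedes it below -/
import Mathlib

section
/- Let V be a real inner product space, and let a, b, v ∈ V with a ≠ 0, b ≠ 0, and |⟨a,b⟩| ≤ ε‖a‖‖b‖ for some ε with 0 < ε < 1. Then ⟨v,a⟩²/‖a‖² + ⟨v,b⟩²/‖b‖² ≤ (1/(1-ε))‖v‖². -/
open RealInnerProductSpace

theorem almost_bessel {V : Type*} [NormedAddCommGroup V] [InnerProductSpace ℝ V]
    (a b v : V) (ε : ℝ) (ha : a ≠ 0) (hb : b ≠ 0) (hε0 : 0 < ε) (hε1 : ε < 1)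
    (hab : |⟪a, b⟫| ≤ ε * ‖a‖ * ‖b‖) :
    ⟪v, a⟫ ^ 2 / ‖a‖ ^ 2 + ⟪v, b⟫ ^ 2 / ‖b‖ ^ 2 ≤ (1 / (1 - ε)) * ‖v‖ ^ 2 := by
  have hna : (0:ℝ) < ‖a‖ := norm_pos_iff.mpr ha
  have hnb : (0:ℝ) < ‖b‖ := norm_pos_iff.mpr hb
  set A := ‖a‖⁻¹ • a with hA
  set B := ‖b‖⁻¹ • b with hB
  have hAA : ⟪A, A⟫ = 1 := by
    rw [real_inner_self_eq_norm_sq, hA, norm_smul, norm_inv, norm_norm]; field_simp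
  have hBB : ⟪B, B⟫ = 1 := by
    rw [real_inner_self_eq_norm_sq, hB, norm_smul, norm_inv, norm_norm]; field_simp
  have hABle : |⟪A, B⟫| ≤ ε := by
    have h : ⟪A, B⟫ = ‖a‖⁻¹ * (‖b‖⁻¹ * ⟪a, b⟫) := by
      rw [hA, hB, real_inner_smul_left, real_inner_smul_right]
    rw [h, abs_mul, abs_mul, abs_inv, abs_inv, abs_norm, abs_norm]
    calc ‖a‖⁻¹ * (‖b‖⁻¹ * |⟪a, b⟫|) ≤ ‖a‖⁻¹ * (‖b‖⁻¹ * (ε * ‖a‖ * ‖b‖)) := by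
          apply mul_le_mul_of_nonneg_left
          apply mul_le_mul_of_nonneg_left hab
          all_goals positivity
      _ = ε := by field_simp
  set x := ⟪v, A⟫ with hx
  set y := ⟪v, B⟫ with hy
  set c := ⟪A, B⟫ with hc
  have key : (0:ℝ) ≤ ‖v - x • A - y • B‖ ^ 2 := by positivity
  have expand : ‖v - x • A - y • B‖ ^ 2 = ‖v‖^2 - x^2 - y^2 + 2*x*y*c := by
    rw [← real_inner_self_eq_norm_sq, ← real_inner_self_eq_norm_sq]
    simp only [inner_sub_left, inner_sub_right, real_inner_smul_left, real_inner_smul_right,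
      hAA, hBB]
    rw [real_inner_comm v A, real_inner_comm v B, real_inner_comm A B]
    rw [← hx, ← hy, ← hc]
    ring
  rw [expand] at key
  have hxa : x = ⟪v, a⟫ / ‖a‖ := by
    rw [hx, hA, real_inner_smul_right]; field_simp
  have hyb : y = ⟪v, b⟫ / ‖b‖ := by
    rw [hy, hB, real_inner_smul_right]; field_simp
  have hgoal : ⟪v, a⟫ ^ 2 / ‖a‖ ^ 2 = x ^ 2 := by rw [hxa]; field_simp
  have hgoal' : ⟪v, b⟫ ^ 2 / ‖b‖ ^ 2 = y ^ 2 := by rw [hyb]; field_simp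
  rw [hgoal, hgoal']
  have hcle : -ε ≤ c ∧ c ≤ ε := abs_le.mp hABle
  have h1 : (0:ℝ) < 1 - ε := by linarith
  rw [div_mul_eq_mul_div, le_div_iff₀ h1]
  nlinarith [sq_nonneg (x - y), sq_nonneg (x + y), hcle.1, hcle.2, sq_nonneg x, sq_nonneg y]
end

section
/- Let (X, μ) be a measure space and f, g, h ∈ L²(μ) real-valued with ∫ g² dμ > 0 and ∫ h² dμ > 0, and suppose |∫ gh dμ| ≤ ε (∫ g² dμ)^{1/2} (∫ h² dμ)^{1/2} for some 0 < ε < 1. Then ∫ ( -(1/(1-ε)) f² + f h - (1/2) h² + 2 f g - g² ) dμ ≤ 0. -/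
/-!
Write `w = g + h / 2`, so that the integrand is `-f² / (1 - ε) + 2 f w - g² - h² / 2`.
Pointwise, `-f² / (1 - ε) + 2 f w ≤ (1 - ε) w²`, which leaves the quadratic form
`(1 - ε) w² - g² - h² / 2 = -ε g² + (1 - ε) g h - (1 + ε) h² / 4` in `g` and `h` alone.
Its integral is nonpositive because the almost orthogonality of `g` and `h` bounds the cross
term by `ε (1 - ε) ‖g‖ ‖h‖`, which the diagonal terms absorb.
-/

open MeasureTheory

lemma neg_one_div_mul_sq_add_two_mul_le {t : ℝ} (ht : 0 < t) (u w : ℝ) :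
    -(1 / t) * u ^ 2 + 2 * u * w ≤ t * w ^ 2 := by
  have hsq : 0 ≤ (u - t * w) ^ 2 / t := by positivity
  have hexpand : (u - t * w) ^ 2 / t = 1 / t * u ^ 2 - 2 * u * w + t * w ^ 2 := by
    field_simp
    ring
  linarith

lemma almost_orthogonal_quadratic_nonpos {x y r ε : ℝ} (hε0 : 0 ≤ ε) (hε1 : ε < 1)
    (hr : |r| ≤ ε * x * y) :
    -ε * x ^ 2 + (1 - ε) * r - (1 + ε) / 4 * y ^ 2 ≤ 0 := by
  have hr' : (1 - ε) * r ≤ (1 - ε) * (ε * x * y) :=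
    mul_le_mul_of_nonneg_left ((le_abs_self r).trans hr) (by linarith)
  have hcoeff : ε * (1 - ε) ^ 2 ≤ 1 + ε := by nlinarith
  nlinarith [mul_nonneg hε0 (sq_nonneg (x - (1 - ε) / 2 * y)), sq_nonneg y]

lemma integral_quadratic_form {X : Type*} [MeasurableSpace X] {μ : Measure X} {g h : X → ℝ}
    (hg : MemLp g 2 μ) (hh : MemLp h 2 μ) (α β γ : ℝ) :
    ∫ x, (α * g x ^ 2 + β * (g x * h x) + γ * h x ^ 2) ∂μ
      = α * ∫ x, g x ^ 2 ∂μ + β * ∫ x, g x * h x ∂μ + γ * ∫ x, h x ^ 2 ∂μ := by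
  have hg2 := hg.integrable_sq
  have hh2 := hh.integrable_sq
  have hgh : Integrable (fun x => g x * h x) μ := hg.integrable_mul hh
  rw [integral_add, integral_add, integral_const_mul, integral_const_mul, integral_const_mul]
  all_goals fun_prop

theorem second_variation_bound_iii_general {X : Type*} [MeasurableSpace X] (μ : Measure X)
    (f g h : X → ℝ) (hf : MemLp f 2 μ) (hg : MemLp g 2 μ) (hh : MemLp h 2 μ)
    (ε : ℝ) (hε0 : 0 < ε) (hε1 : ε < 1)
    (hortho : |∫ x, g x * h x ∂μ| ≤
      ε * (∫ x, g x ^ 2 ∂μ) ^ (1/2 : ℝ) * (∫ x, h x ^ 2 ∂μ) ^ (1/2 : ℝ)) :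
    ∫ x, (-(1 / (1 - ε)) * f x ^ 2 + f x * h x - (1 / 2) * h x ^ 2
      + 2 * f x * g x - g x ^ 2) ∂μ ≤ 0 := by
  have hf2 := hf.integrable_sq
  have hg2 := hg.integrable_sq
  have hh2 := hh.integrable_sq
  have hfg : Integrable (fun x => 2 * f x * g x) μ := (hf.const_mul 2).integrable_mul hg
  have hfh : Integrable (fun x => f x * h x) μ := hf.integrable_mul hh
  have hgh : Integrable (fun x => g x * h x) μ := hg.integrable_mul hh
  have hpointwise : ∀ x, -(1 / (1 - ε)) * f x ^ 2 + f x * h x - (1 / 2) * h x ^ 2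
      + 2 * f x * g x - g x ^ 2
      ≤ -ε * g x ^ 2 + (1 - ε) * (g x * h x) + -((1 + ε) / 4) * h x ^ 2 := fun x => by
    linear_combination
      neg_one_div_mul_sq_add_two_mul_le (sub_pos.2 hε1) (f x) (g x + h x / 2)
  have hsqrt (u : X → ℝ) : (∫ x, u x ^ 2 ∂μ) = √(∫ x, u x ^ 2 ∂μ) ^ 2 :=
    (Real.sq_sqrt (integral_nonneg fun x => sq_nonneg (u x))).symm
  rw [← Real.sqrt_eq_rpow, ← Real.sqrt_eq_rpow] at hortho
  calc _ ≤ ∫ x, (-ε * g x ^ 2 + (1 - ε) * (g x * h x) + -((1 + ε) / 4) * h x ^ 2) ∂μ :=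
        integral_mono (by fun_prop) (by fun_prop) hpointwise
    _ = -ε * (∫ x, g x ^ 2 ∂μ) + (1 - ε) * (∫ x, g x * h x ∂μ)
          - (1 + ε) / 4 * ∫ x, h x ^ 2 ∂μ := by
        rw [integral_quadratic_form hg hh]
        ring
    _ ≤ 0 := by
        rw [hsqrt g, hsqrt h]
        exact almost_orthogonal_quadratic_nonpos hε0.le hε1 hortho

theorem second_variation_bound_iii {X : Type*} [MeasurableSpace X] (μ : Measure X)
    (f g h : X → ℝ) (hf : MemLp f 2 μ) (hg : MemLp g 2 μ) (hh : MemLp h 2 μ)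
    (hgpos : 0 < ∫ x, g x ^ 2 ∂μ) (hhpos : 0 < ∫ x, h x ^ 2 ∂μ)
    (ε : ℝ) (hε0 : 0 < ε) (hε1 : ε < 1)
    (hortho : |∫ x, g x * h x ∂μ| ≤
      ε * (∫ x, g x ^ 2 ∂μ) ^ (1/2 : ℝ) * (∫ x, h x ^ 2 ∂μ) ^ (1/2 : ℝ)) :
    ∫ x, (-(1 / (1 - ε)) * f x ^ 2 + f x * h x - (1 / 2) * h x ^ 2
      + 2 * f x * g x - g x ^ 2) ∂μ ≤ 0 :=
  second_variation_bound_iii_general μ f g h hf hg hh ε hε0 hε1 hortho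
end
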